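/- With h a random boolean function on a finite domain X where each h(x) is independently 1 with probability α/2 (0 < α ≤ 1), and c_j the point function at j ∈ X, for any distribution D on X: Pr[error_D(c_j, h) ≤ α] ≥ α/4. -/

import Mathlib

/-!
On the event `h j = true` the hypothesis agrees with `c_j` at `j`, and it errs at `x ≠ j` exactly
when `h x = true`; by independence this event has probability `α/2` and the expected error on it
is `(α/2)² · D(X \ {j}) ≤ α · α/4`. Markov's inequality then puts mass at most `α/4` on
`h j = true ∧ error > α`, leaving mass at least `α/2 - α/4` on `h j = true ∧ error ≤ α`.
-/

open scoped Classical
noncomputable section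

/-- Generalization error of `h` w.r.t. target `c` under distribution `D` on a finite domain. -/
def errD {X : Type*} [Fintype X] (D : X → ℝ) (c h : X → Bool) : ℝ :=
  ∑ x, D x * (if h x = c x then 0 else 1)

open Finset

theorem errD_nonneg {X : Type*} [Fintype X] {D : X → ℝ} (hD : ∀ x, 0 ≤ D x) (c h : X → Bool) :
    0 ≤ errD D c h :=
  sum_nonneg fun x _ => mul_nonneg (hD x) (by split_ifs <;> norm_num)

theorem Finset.mul_sum_filter_lt_le_sum_mul {ι : Type*} (s : Finset ι) (μ f : ι → ℝ)
    (hμ : ∀ i ∈ s, 0 ≤ μ i) (hf : ∀ i ∈ s, 0 ≤ f i) (a : ℝ) :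
    a * ∑ i ∈ s with a < f i, μ i ≤ ∑ i ∈ s, μ i * f i :=
  calc a * ∑ i ∈ s with a < f i, μ i
      = ∑ i ∈ s with a < f i, μ i * a := by rw [mul_sum]; simp_rw [mul_comm a]
    _ ≤ ∑ i ∈ s with a < f i, μ i * f i := by
      refine sum_le_sum fun i hi => ?_
      rw [mem_filter] at hi
      exact mul_le_mul_of_nonneg_left hi.2.le (hμ i hi.1)
    _ ≤ ∑ i ∈ s, μ i * f i :=
      sum_le_sum_of_subset_of_nonneg (filter_subset _ _)
        fun i hi _ => mul_nonneg (hμ i hi) (hf i hi)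

section ProductWeight

variable {X : Type*} [Fintype X] [DecidableEq X] {w : X → Bool → ℝ}

theorem sum_prod_filter_forall_eq_true (hw : ∀ x, w x false + w x true = 1) (S : Finset X) :
    ∑ h : X → Bool with ∀ x ∈ S, h x = true, ∏ x, w x (h x) = ∏ x ∈ S, w x true := by
  have hsum : ∀ x, ∑ b, (if x ∈ S → b = true then w x b else 0)
      = if x ∈ S then w x true else 1 := by
    intro x
    by_cases hx : x ∈ S <;> simp [hx, hw, add_comm]
  rw [sum_filter, ← Fintype.prod_ite_mem]
  simp_rw [← hsum, Fintype.prod_sum, Fintype.prod_ite_zero]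

theorem sum_prod_filter_eq_true (hw : ∀ x, w x false + w x true = 1) (j : X) :
    ∑ h : X → Bool with h j = true, ∏ x, w x (h x) = w j true := by
  simpa using sum_prod_filter_forall_eq_true hw {j}

theorem sum_prod_filter_eq_true_mul_ite_ne (hw : ∀ x, w x false + w x true = 1) (j x : X) :
    ∑ h : X → Bool with h j = true, (∏ y, w y (h y)) * (if h x = decide (x = j) then 0 else 1)
      = if x = j then 0 else w j true * w x true := by
  split_ifs with hxj
  · subst hxj
    exact sum_eq_zero fun h hh => by simp [(mem_filter.mp hh).2]
  · rw [← prod_pair (f := fun y => w y true) (Ne.symm hxj), ← sum_prod_filter_forall_eq_true hw,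
      sum_filter, sum_filter]
    refine sum_congr rfl fun h _ => ?_
    cases hj : h j <;> cases hx : h x <;> simp [hxj, hj, hx]

theorem sum_prod_filter_eq_true_mul_errD (hw : ∀ x, w x false + w x true = 1) (j : X)
    (D : X → ℝ) :
    ∑ h : X → Bool with h j = true, (∏ x, w x (h x)) * errD D (fun x => decide (x = j)) h
      = w j true * ∑ x ∈ univ.erase j, D x * w x true := by
  unfold errD
  simp_rw [mul_sum, mul_left_comm _ (D _)]
  rw [sum_comm]
  simp_rw [← mul_sum, sum_prod_filter_eq_true_mul_ite_ne hw]
  rw [← filter_ne', sum_filter]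
  refine sum_congr rfl fun x _ => ?_
  split_ifs <;> simp_all

end ProductWeight

/-- With `h` a random boolean function on a finite domain `X`, each value
`h x` independently `true` with probability `α/2` (for `0 < α ≤ 1`), and `c_j` the point
function at `j ∈ X`, for any distribution `D` on `X`:
`Pr[error_D(c_j, h) ≤ α] ≥ α/4`. -/
theorem stmt_8 {X : Type*} [Fintype X] [DecidableEq X] (j : X)
    (D : X → ℝ) (hD : ∀ x, 0 ≤ D x) (hD1 : ∑ x, D x = 1)
    (α : ℝ) (hα : 0 < α) (hα1 : α ≤ 1)
    (μ : (X → Bool) → ℝ)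
    (hμ : ∀ h, μ h = ∏ x, (if h x then α / 2 else 1 - α / 2)) :
    α / 4 ≤ ∑ h ∈ Finset.univ.filter
        (fun h : X → Bool => errD D (fun x => decide (x = j)) h ≤ α), μ h := by
  set w : X → Bool → ℝ := fun _ b => if b then α / 2 else 1 - α / 2
  have hw : ∀ x, w x false + w x true = 1 := by simp [w]
  have hμw : μ = fun h => ∏ x, w x (h x) := funext hμ
  have hμ0 : ∀ h, 0 ≤ μ h := fun h =>
    hμ h ▸ prod_nonneg fun x _ => by split_ifs <;> linarith
  set err := errD D (fun x => decide (x = j))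
  set hit := univ.filter fun h : X → Bool => h j = true
  have hit_mass : ∑ h ∈ hit, μ h = α / 2 := by
    simpa [hμw, w] using sum_prod_filter_eq_true hw j
  have hit_err : ∑ h ∈ hit, μ h * err h ≤ α / 2 * (α / 2) := by
    have hD1' : ∑ x ∈ univ.erase j, D x ≤ 1 :=
      hD1 ▸ sum_le_sum_of_subset_of_nonneg (erase_subset _ _) fun x _ _ => hD x
    rw [hμw, sum_prod_filter_eq_true_mul_errD hw, ← sum_mul]
    calc α / 2 * ((∑ x ∈ univ.erase j, D x) * (α / 2)) ≤ α / 2 * (1 * (α / 2)) := by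
          gcongr
      _ = α / 2 * (α / 2) := by ring
  have miss_mass : ∑ h ∈ hit with α < err h, μ h ≤ α / 4 := by
    refine le_of_mul_le_mul_left ?_ hα
    calc α * ∑ h ∈ hit with α < err h, μ h ≤ ∑ h ∈ hit, μ h * err h :=
          mul_sum_filter_lt_le_sum_mul hit μ err (fun h _ => hμ0 h)
            (fun h _ => errD_nonneg hD _ h) α
      _ ≤ α * (α / 4) := by linarith
  calc α / 4 ≤ ∑ h ∈ hit, μ h - ∑ h ∈ hit with α < err h, μ h := by linarith
    _ = ∑ h ∈ hit with ¬α < err h, μ h := by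
      rw [← sum_filter_add_sum_filter_not hit fun h => α < err h]; ring
    _ ≤ ∑ h with err h ≤ α, μ h :=
      sum_le_sum_of_subset_of_nonneg
        (fun h hh => by simp_all [hit]) fun h _ _ => hμ0 h
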